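/- arXiv:2605.02956 — 2 statements merged into one kernel-verified Lean document; each statement's English description precedes it below -/
import Mathlib

section
/- At the upper positive equilibrium C* = C₊* (satisfying r(1−C*/K) = 2/C* and C* > K/2), the Routh–Hurwitz quantities A₁ = p+q+α, A₂ = pq + (p+q)(α − 1/C*), A₃ = pq(α − 2/C*) with p = β₁C*, q = β₂C*, α = (r/K)C* satisfy A₁ > 0, A₂ > 0, A₃ > 0, and A₁A₂ > A₃. Moreover A₁A₂ − A₃ = (p+q)pq + 2pq/C* + (p+q)(p+q+α)(α − 1/C*). -/
theorem routh_hurwitz_upper_branch (r K β₁ β₂ Cs : ℝ)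
    (hr : 0 < r) (hK : 0 < K) (hβ₁ : 0 < β₁) (hβ₂ : 0 < β₂)
    (hCs : K / 2 < Cs) (heq : r * (1 - Cs / K) = 2 / Cs)
    (p q α A₁ A₂ A₃ : ℝ)
    (hp : p = β₁ * Cs) (hq : q = β₂ * Cs) (hα : α = (r / K) * Cs)
    (hA₁ : A₁ = p + q + α)
    (hA₂ : A₂ = p * q + (p + q) * (α - 1 / Cs))
    (hA₃ : A₃ = p * q * (α - 2 / Cs)) :
    0 < A₁ ∧ 0 < A₂ ∧ 0 < A₃ ∧ A₃ < A₁ * A₂ ∧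
    A₁ * A₂ - A₃ =
      (p + q) * p * q + 2 * p * q / Cs + (p + q) * (p + q + α) * (α - 1 / Cs) := by
  have hCs0 : 0 < Cs := lt_trans (by linarith) hCs
  have h2 : 2 / Cs = r - r * Cs / K := by
    rw [← heq]; field_simp
  have halpha2 : α - 2 / Cs = (r / K) * (2 * Cs - K) := by
    rw [hα, h2]; field_simp; ring
  have h1 : 1 / Cs = (r - r * Cs / K) / 2 := by
    rw [← h2]; ring
  have halpha1 : α - 1 / Cs = (r / (2 * K)) * (3 * Cs - K) := by
    rw [hα, h1]; field_simp; ring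
  have hpos2 : 0 < α - 2 / Cs := by
    rw [halpha2]
    exact mul_pos (div_pos hr hK) (by linarith)
  have hpos1 : 0 < α - 1 / Cs := by
    rw [halpha1]
    exact mul_pos (div_pos hr (by linarith)) (by linarith)
  have hpp : 0 < p := by rw [hp]; positivity
  have hqp : 0 < q := by rw [hq]; positivity
  have hαp : 0 < α := by rw [hα]; positivity
  have hid : A₁ * A₂ - A₃ =
      (p + q) * p * q + 2 * p * q / Cs + (p + q) * (p + q + α) * (α - 1 / Cs) := by
    subst hA₁ hA₂ hA₃
    have : (2 : ℝ) / Cs = 2 * (1 / Cs) := by ring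
    field_simp
    ring
  refine ⟨by rw [hA₁]; positivity, ?_, ?_, ?_, hid⟩
  · rw [hA₂]; positivity
  · rw [hA₃]; positivity
  · nlinarith [mul_pos (mul_pos hpp hqp) (add_pos hpp hqp),
      mul_pos (mul_pos (add_pos hpp hqp) (by positivity : (0:ℝ) < p + q + α)) hpos1,
      div_pos (mul_pos (mul_pos (by norm_num : (0:ℝ) < 2) hpp) hqp) hCs0]
end

section
/- Under the replicated dynamics, if f_i − f_j = Δ > 0, the forcing into j is bounded, 0 ≤ a_j x_{j'}(t)/x_j(t) ≤ M_j, a_i x_{i'}(t)/x_i(t) ≥ 0, and R·Δ > M_j + max(k_i − k_j, 0), then with ε := RΔ − M_j − (k_i−k_j)₊ > 0 one has x_i(t)/x_j(t) ≥ (x_i(0)/x_j(0))·e^{εt} for all t ≥ 0, so the ratio diverges to +∞. -/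
theorem pairwise_exponential_divergence (ai aj ki kj fi fj R Mj : ℝ)
    (hai : 0 < ai) (haj : 0 < aj) (hR : 0 < R) (hMj : 0 ≤ Mj)
    (hΔ : 0 < fi - fj)
    (xi xj xip xjp φ : ℝ → ℝ)
    (hxi : ∀ t, 0 < xi t) (hxj : ∀ t, 0 < xj t)
    (hxip : ∀ t, 0 ≤ t → 0 ≤ xip t)
    (hdi : ∀ t, 0 ≤ t → HasDerivAt xi (ai * xip t - ki * xi t + R * xi t * (fi - φ t)) t)
    (hdj : ∀ t, 0 ≤ t → HasDerivAt xj (aj * xjp t - kj * xj t + R * xj t * (fj - φ t)) t)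
    (hforce : ∀ t, 0 ≤ t → 0 ≤ aj * xjp t / xj t ∧ aj * xjp t / xj t ≤ Mj)
    (hthr : Mj + max (ki - kj) 0 < R * (fi - fj)) :
    (∀ t, 0 ≤ t →
        (xi 0 / xj 0) * Real.exp ((R * (fi - fj) - Mj - max (ki - kj) 0) * t)
          ≤ xi t / xj t) ∧
    Filter.Tendsto (fun t => xi t / xj t) Filter.atTop Filter.atTop := by
  set ε : ℝ := R * (fi - fj) - Mj - max (ki - kj) 0 with hεdef
  have hε : 0 < ε := by simp only [hεdef]; linarith
  set h : ℝ → ℝ := fun t => Real.log (xi t) - Real.log (xj t) - ε * t with hh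
  -- derivative of h at every t ≥ 0
  have hD : ∀ t, 0 ≤ t → HasDerivAt h
      ((ai * xip t - ki * xi t + R * xi t * (fi - φ t)) / xi t
        - (aj * xjp t - kj * xj t + R * xj t * (fj - φ t)) / xj t - ε) t := by
    intro t ht
    have h1 := (hdi t ht).log (hxi t).ne'
    have h2 := (hdj t ht).log (hxj t).ne'
    have h3 : HasDerivAt (fun s : ℝ => ε * s) ε t := by
      simpa using (hasDerivAt_id t).const_mul ε
    exact (h1.sub h2).sub h3
  have hDnn : ∀ t, 0 ≤ t →
      0 ≤ (ai * xip t - ki * xi t + R * xi t * (fi - φ t)) / xi t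
        - (aj * xjp t - kj * xj t + R * xj t * (fj - φ t)) / xj t - ε := by
    intro t ht
    have hxit := hxi t
    have hxjt := hxj t
    have e1 : (ai * xip t - ki * xi t + R * xi t * (fi - φ t)) / xi t
        = ai * xip t / xi t - ki + R * (fi - φ t) := by
      field_simp
    have e2 : (aj * xjp t - kj * xj t + R * xj t * (fj - φ t)) / xj t
        = aj * xjp t / xj t - kj + R * (fj - φ t) := by
      field_simp
    rw [e1, e2]
    have hA : 0 ≤ ai * xip t / xi t :=
      div_nonneg (mul_nonneg hai.le (hxip t ht)) hxit.le
    have hB := (hforce t ht).2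
    have hmax : ki - kj ≤ max (ki - kj) 0 := le_max_left _ _
    simp only [hεdef]
    linarith
  -- monotonicity of h on Ici 0
  have hmono : MonotoneOn h (Set.Ici (0 : ℝ)) := by
    apply monotoneOn_of_deriv_nonneg (convex_Ici 0)
    · intro t ht
      exact ((hD t ht).continuousAt).continuousWithinAt
    · intro t ht
      rw [interior_Ici] at ht
      exact ((hD t (le_of_lt ht)).differentiableAt).differentiableWithinAt
    · intro t ht
      rw [interior_Ici] at ht
      rw [(hD t ht.le).deriv]
      exact hDnn t ht.le
  have key : ∀ t, 0 ≤ t →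
      (xi 0 / xj 0) * Real.exp (ε * t) ≤ xi t / xj t := by
    intro t ht
    have := hmono (Set.self_mem_Ici) (Set.mem_Ici.2 ht) ht
    simp only [hh, mul_zero, sub_zero] at this
    -- this : log xi 0 - log xj 0 ≤ log xi t - log xj t - ε t
    have hlog : Real.log (xi 0 / xj 0) + ε * t ≤ Real.log (xi t / xj t) := by
      rw [Real.log_div (hxi 0).ne' (hxj 0).ne', Real.log_div (hxi t).ne' (hxj t).ne']
      linarith
    calc (xi 0 / xj 0) * Real.exp (ε * t)
        = Real.exp (Real.log (xi 0 / xj 0) + ε * t) := by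
          rw [Real.exp_add, Real.exp_log (div_pos (hxi 0) (hxj 0))]
      _ ≤ Real.exp (Real.log (xi t / xj t)) := Real.exp_le_exp.2 hlog
      _ = xi t / xj t := Real.exp_log (div_pos (hxi t) (hxj t))
  refine ⟨key, ?_⟩
  have hlow : Filter.Tendsto (fun t => (xi 0 / xj 0) * Real.exp (ε * t))
      Filter.atTop Filter.atTop := by
    apply Filter.Tendsto.const_mul_atTop (div_pos (hxi 0) (hxj 0))
    exact Real.tendsto_exp_atTop.comp (Filter.tendsto_atTop_mono
      (fun t => le_refl _) (Filter.Tendsto.const_mul_atTop hε Filter.tendsto_id))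
  exact Filter.tendsto_atTop_mono' _
    (Filter.eventually_atTop.2 ⟨0, fun t ht => key t ht⟩) hlow
end
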